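/- Let G be the (n×n)-grid and let Q ⊆ V_1 be a left-pyramidal set with two different left spots (i_1,j_1) and (i_2,j_2), such that (i_1,j_1) has the smallest and (i_2,j_2) the largest x-coordinate among all left spots of Q. Let Q' = (Q \ {(i_2,j_2)}) ∪ {(i_1−1, j_1+1)}. Then Q' is also a left-pyramidal set and δ(Q') ≤ δ(Q). -/
import Mathlib


/-- Vertices of the (n × n)-grid, as pairs of integers in {1, ..., n}. -/
def gridSet (n : ℕ) : Finset (ℕ × ℕ) := Finset.Icc 1 n ×ˢ Finset.Icc 1 n

/-- Grid adjacency: (x,y) ~ (x',y') iff |x-x'| + |y-y'| = 1. -/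
def gridAdj (p q : ℕ × ℕ) : Prop :=
  |(p.1 : ℤ) - q.1| + |(p.2 : ℤ) - q.2| = 1

instance (p q : ℕ × ℕ) : Decidable (gridAdj p q) := by unfold gridAdj; infer_instance

/-- V₁: the grid vertices (x, y) with x + y even. -/
def V1 (n : ℕ) : Finset (ℕ × ℕ) := (gridSet n).filter (fun p => Even (p.1 + p.2))

/-- N(S): the set of grid vertices outside S that are adjacent to some vertex of S. -/
def gridNbr (n : ℕ) (S : Finset (ℕ × ℕ)) : Finset (ℕ × ℕ) :=
  (gridSet n).filter (fun q => q ∉ S ∧ ∃ p ∈ S, gridAdj p q)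

/-- δ(S) = |N(S)|. -/
def deltaN (n : ℕ) (S : Finset (ℕ × ℕ)) : ℕ := (gridNbr n S).card

/-- A set Q ⊆ V₁ is pyramidal if for every (x, y) ∈ Q with y ≥ 2:
(x-1, y-1) ∈ Q whenever x ≥ 2, and (x+1, y-1) ∈ Q whenever x ≤ n-1. -/
def Pyramidal (n : ℕ) (Q : Finset (ℕ × ℕ)) : Prop :=
  ∀ x y : ℕ, (x, y) ∈ Q → 2 ≤ y →
    (2 ≤ x → (x - 1, y - 1) ∈ Q) ∧ (x + 1 ≤ n → (x + 1, y - 1) ∈ Q)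

/-- A pyramidal set Q is left-pyramidal if (x,y) ∈ Q and x ≥ 3 imply (x-2, y) ∈ Q. -/
def LeftPyramidal (n : ℕ) (Q : Finset (ℕ × ℕ)) : Prop :=
  Pyramidal n Q ∧ ∀ x y : ℕ, (x, y) ∈ Q → 3 ≤ x → (x - 2, y) ∈ Q

/-- A left-pyramidal set Q has a left spot at (i, j) if (i, j) ∈ Q and
(i-1, j+1) ∈ V(G) \ Q. -/
def LeftSpot (n : ℕ) (Q : Finset (ℕ × ℕ)) (i j : ℕ) : Prop :=
  (i, j) ∈ Q ∧ (i - 1, j + 1) ∈ gridSet n ∧ (i - 1, j + 1) ∉ Q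

lemma mem_gridSet' {n x y : ℕ} : (x, y) ∈ gridSet n ↔ 1 ≤ x ∧ x ≤ n ∧ 1 ≤ y ∧ y ≤ n := by
  simp only [gridSet, Finset.mem_product, Finset.mem_Icc]
  tauto

lemma adj_char' {a b c d : ℕ} : gridAdj (a, b) (c, d) ↔
    ((a = c + 1 ∨ c = a + 1) ∧ b = d) ∨ (a = c ∧ (b = d + 1 ∨ d = b + 1)) := by
  unfold gridAdj
  simp only
  rcases abs_cases ((a : ℤ) - c) with ⟨h1, h2⟩ | ⟨h1, h2⟩ <;>
    rcases abs_cases ((b : ℤ) - d) with ⟨h3, h4⟩ | ⟨h3, h4⟩ <;> omega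

/-- Let Q ⊆ V₁ be a left-pyramidal set with two different left spots (i₁, j₁) and (i₂, j₂),
such that (i₁, j₁) has the smallest and (i₂, j₂) the largest x-coordinate among all left
spots of Q. Then Q' = (Q \ {(i₂, j₂)}) ∪ {(i₁ - 1, j₁ + 1)} is also left-pyramidal and
δ(Q') ≤ δ(Q). -/
theorem leftSpot_move (n : ℕ) (Q : Finset (ℕ × ℕ)) (hQ : Q ⊆ V1 n)
    (hlp : LeftPyramidal n Q) (i₁ j₁ i₂ j₂ : ℕ)
    (hs₁ : LeftSpot n Q i₁ j₁) (hs₂ : LeftSpot n Q i₂ j₂)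
    (hne : (i₁, j₁) ≠ (i₂, j₂))
    (hmin : ∀ i j, LeftSpot n Q i j → i₁ ≤ i)
    (hmax : ∀ i j, LeftSpot n Q i j → i ≤ i₂) :
    LeftPyramidal n (insert (i₁ - 1, j₁ + 1) (Q.erase (i₂, j₂))) ∧
    deltaN n (insert (i₁ - 1, j₁ + 1) (Q.erase (i₂, j₂))) ≤ deltaN n Q := by
  obtain ⟨hQ1, hG1, hN1⟩ := hs₁
  obtain ⟨hQ2, hG2, hN2⟩ := hs₂
  have hne' : ¬(i₁ = i₂ ∧ j₁ = j₂) := by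
    intro ⟨h1, h2⟩; exact hne (by rw [h1, h2])
  -- basic parity and grid facts
  have hgrid : ∀ p ∈ Q, p ∈ gridSet n := by
    intro p hp
    have := hQ hp
    simp only [V1, Finset.mem_filter] at this
    exact this.1
  have hpar : ∀ x y : ℕ, (x, y) ∈ Q → (x + y) % 2 = 0 := by
    intro x y hp
    have := hQ hp
    simp only [V1, Finset.mem_filter, Nat.even_iff] at this
    exact this.2
  have hB1 := mem_gridSet'.mp (hgrid _ hQ1)
  have hB2 := mem_gridSet'.mp (hgrid _ hQ2)
  have hBG1 := mem_gridSet'.mp hG1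
  have hBG2 := mem_gridSet'.mp hG2
  have h2i₁ : 2 ≤ i₁ := by omega
  have h2i₂ : 2 ≤ i₂ := by omega
  have hle : i₁ ≤ i₂ := hmin _ _ ⟨hQ2, hG2, hN2⟩
  have hpar1 : (i₁ + j₁) % 2 = 0 := hpar _ _ hQ1
  have hpar2 : (i₂ + j₂) % 2 = 0 := hpar _ _ hQ2
  -- key exclusion facts
  have K1 : (i₂ + 1, j₂ + 1) ∉ Q := by
    intro h
    have h2 := hlp.2 (i₂ + 1) (j₂ + 1) h (by omega)
    have e : i₂ + 1 - 2 = i₂ - 1 := by omega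
    rw [e] at h2
    exact hN2 h2
  have A1 : (i₂, j₂ + 2) ∉ Q := by
    intro h
    have h2 := (hlp.1 i₂ (j₂ + 2) h (by omega)).1 h2i₂
    have e : j₂ + 2 - 1 = j₂ + 1 := by omega
    rw [e] at h2
    exact hN2 h2
  have K3 : (i₂ + 2, j₂) ∉ Q := by
    intro h
    have hg := mem_gridSet'.mp (hgrid _ h)
    have hspot : LeftSpot n Q (i₂ + 2) j₂ := by
      refine ⟨h, ?_, ?_⟩
      · have e : i₂ + 2 - 1 = i₂ + 1 := by omega
        rw [e]
        exact mem_gridSet'.mpr (by omega)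
      · have e : i₂ + 2 - 1 = i₂ + 1 := by omega
        rw [e]; exact K1
    have := hmax _ _ hspot; omega
  have K2 : 4 ≤ i₁ → (i₁ - 3, j₁ + 1) ∈ Q := by
    intro h4
    by_contra hmem
    have hQm : (i₁ - 2, j₁) ∈ Q := hlp.2 i₁ j₁ hQ1 (by omega)
    have e : i₁ - 2 - 1 = i₁ - 3 := by omega
    have hspot : LeftSpot n Q (i₁ - 2) j₁ := by
      refine ⟨hQm, ?_, ?_⟩
      · rw [e]; exact mem_gridSet'.mpr (by omega)
      · rw [e]; exact hmem
    have := hmin _ _ hspot; omega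
  have hQ1' : (i₁, j₁) ∈ Q.erase (i₂, j₂) := Finset.mem_erase.mpr ⟨hne, hQ1⟩
  -- left-pyramidality of Q'
  have hLP : LeftPyramidal n (insert (i₁ - 1, j₁ + 1) (Q.erase (i₂, j₂))) := by
    constructor
    · intro x y hxy hy2
      rw [Finset.mem_insert] at hxy
      rcases hxy with hb | hq
      · injection hb with hx hy
        subst hx; subst hy
        constructor
        · intro hx2
          have h3 : 3 ≤ i₁ := by omega
          have hm : (i₁ - 2, j₁) ∈ Q := hlp.2 i₁ j₁ hQ1 h3
          have e1 : i₁ - 1 - 1 = i₁ - 2 := by omega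
          have e2 : j₁ + 1 - 1 = j₁ := by omega
          rw [e1, e2]
          refine Finset.mem_insert_of_mem (Finset.mem_erase.mpr ⟨?_, hm⟩)
          simp only [ne_eq, Prod.mk.injEq, not_and]
          omega
        · intro hxn
          have e1 : i₁ - 1 + 1 = i₁ := by omega
          have e2 : j₁ + 1 - 1 = j₁ := by omega
          rw [e1, e2]
          exact Finset.mem_insert_of_mem hQ1'
      · have hxyQ := (Finset.mem_erase.mp hq).2
        have hch := hlp.1 x y hxyQ hy2
        constructor
        · intro hx2
          refine Finset.mem_insert_of_mem (Finset.mem_erase.mpr ⟨?_, hch.1 hx2⟩)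
          intro heq
          injection heq with e1 e2
          have hxy' : (x, y) = (i₂ + 1, j₂ + 1) := by
            simp only [Prod.mk.injEq]; omega
          rw [hxy'] at hxyQ
          exact K1 hxyQ
        · intro hxn
          refine Finset.mem_insert_of_mem (Finset.mem_erase.mpr ⟨?_, hch.2 hxn⟩)
          intro heq
          injection heq with e1 e2
          have hxy' : (x, y) = (i₂ - 1, j₂ + 1) := by
            simp only [Prod.mk.injEq]; omega
          rw [hxy'] at hxyQ
          exact hN2 hxyQ
    · intro x y hxy hx3
      rw [Finset.mem_insert] at hxy
      rcases hxy with hb | hq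
      · injection hb with hx hy
        subst hx; subst hy
        have h4 : 4 ≤ i₁ := by omega
        have hm := K2 h4
        have e : i₁ - 1 - 2 = i₁ - 3 := by omega
        rw [e]
        refine Finset.mem_insert_of_mem (Finset.mem_erase.mpr ⟨?_, hm⟩)
        simp only [ne_eq, Prod.mk.injEq, not_and]
        omega
      · have hxyQ := (Finset.mem_erase.mp hq).2
        have hm := hlp.2 x y hxyQ hx3
        refine Finset.mem_insert_of_mem (Finset.mem_erase.mpr ⟨?_, hm⟩)
        intro heq
        injection heq with e1 e2
        have hxy' : (x, y) = (i₂ + 2, j₂) := by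
          simp only [Prod.mk.injEq]; omega
        rw [hxy'] at hxyQ
        exact K3 hxyQ
  refine ⟨hLP, ?_⟩
  -- the neighborhood inclusion
  have haN : (i₂, j₂ + 1) ∈ gridNbr n Q := by
    simp only [gridNbr, Finset.mem_filter]
    refine ⟨mem_gridSet'.mpr (by omega), ?_, ⟨(i₂, j₂), hQ2, ?_⟩⟩
    · intro h
      have := hpar _ _ h
      omega
    · rw [adj_char']; omega
  have hsub : gridNbr n (insert (i₁ - 1, j₁ + 1) (Q.erase (i₂, j₂))) ⊆
      insert (i₁ - 1, j₁ + 2) ((gridNbr n Q).erase (i₂, j₂ + 1)) := by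
    intro q hq
    simp only [gridNbr, Finset.mem_filter] at hq
    obtain ⟨hqg, hqQ', p, hpQ', hadj⟩ := hq
    obtain ⟨qx, qy⟩ := q
    have hqb := mem_gridSet'.mp hqg
    rw [Finset.mem_insert] at hpQ'
    rcases hpQ' with rfl | hpQ
    · -- p is the new point (i₁ - 1, j₁ + 1)
      rw [adj_char'] at hadj
      rcases hadj with ⟨h1 | h1, h2⟩ | ⟨h1, h2 | h2⟩
      · -- q = (i₁ - 2, j₁ + 1)
        have h3 : 3 ≤ i₁ := by omega
        have hm : (i₁ - 2, j₁) ∈ Q := hlp.2 i₁ j₁ hQ1 h3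
        refine Finset.mem_insert_of_mem (Finset.mem_erase.mpr ⟨?_, ?_⟩)
        · simp only [ne_eq, Prod.mk.injEq, not_and]; omega
        · simp only [gridNbr, Finset.mem_filter]
          refine ⟨hqg, ?_, ⟨(i₁ - 2, j₁), hm, ?_⟩⟩
          · intro h
            have := hpar _ _ h
            omega
          · rw [adj_char']; omega
      · -- q = (i₁, j₁ + 1)
        refine Finset.mem_insert_of_mem (Finset.mem_erase.mpr ⟨?_, ?_⟩)
        · simp only [ne_eq, Prod.mk.injEq, not_and]
          intro hx hy
          exact absurd ⟨by omega, by omega⟩ hne'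
        · simp only [gridNbr, Finset.mem_filter]
          refine ⟨hqg, ?_, ⟨(i₁, j₁), hQ1, ?_⟩⟩
          · intro h
            have := hpar _ _ h
            omega
          · rw [adj_char']; omega
      · -- q = (i₁ - 1, j₁)
        refine Finset.mem_insert_of_mem (Finset.mem_erase.mpr ⟨?_, ?_⟩)
        · simp only [ne_eq, Prod.mk.injEq, not_and]; omega
        · simp only [gridNbr, Finset.mem_filter]
          refine ⟨hqg, ?_, ⟨(i₁, j₁), hQ1, ?_⟩⟩
          · intro h
            have := hpar _ _ h
            omega
          · rw [adj_char']; omega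
      · -- q = (i₁ - 1, j₁ + 2) = b'
        have : (qx, qy) = (i₁ - 1, j₁ + 2) := by
          simp only [Prod.mk.injEq]; omega
        rw [this]
        exact Finset.mem_insert_self _ _
    · -- p ∈ Q.erase (i₂, j₂)
      obtain ⟨px, py⟩ := p
      have hpne := (Finset.mem_erase.mp hpQ).1
      have hpQQ := (Finset.mem_erase.mp hpQ).2
      have hpne' : ¬(px = i₂ ∧ py = j₂) := by
        intro ⟨e1, e2⟩; exact hpne (by rw [e1, e2])
      have hparp := hpar _ _ hpQQ
      rw [adj_char'] at hadj
      have hqnQ : (qx, qy) ∉ Q := by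
        intro h
        have hnotins : (qx, qy) ∉ Q.erase (i₂, j₂) := by
          intro h'
          exact hqQ' (Finset.mem_insert_of_mem h')
        have hqc : (qx, qy) = (i₂, j₂) := by
          by_contra hc
          exact hnotins (Finset.mem_erase.mpr ⟨hc, h⟩)
        injection hqc with e1 e2
        have := hpar _ _ h
        omega
      refine Finset.mem_insert_of_mem (Finset.mem_erase.mpr ⟨?_, ?_⟩)
      · -- q ≠ a
        intro heq
        injection heq with e1 e2
        -- p is a Q-neighbor of (i₂, j₂+1) other than (i₂, j₂)
        rcases hadj with ⟨h1 | h1, h2⟩ | ⟨h1, h2 | h2⟩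
        · have : (px, py) = (i₂ + 1, j₂ + 1) := by simp only [Prod.mk.injEq]; omega
          rw [this] at hpQQ; exact K1 hpQQ
        · have hpx : 1 ≤ px := (mem_gridSet'.mp (hgrid _ hpQQ)).1
          have : (px, py) = (i₂ - 1, j₂ + 1) := by simp only [Prod.mk.injEq]; omega
          rw [this] at hpQQ; exact hN2 hpQQ
        · have : (px, py) = (i₂, j₂ + 2) := by simp only [Prod.mk.injEq]; omega
          rw [this] at hpQQ; exact A1 hpQQ
        · exact hpne' ⟨by omega, by omega⟩
      · simp only [gridNbr, Finset.mem_filter]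
        exact ⟨hqg, hqnQ, ⟨(px, py), hpQQ, by rw [adj_char']; omega⟩⟩
  have hcard1 : 0 < (gridNbr n Q).card := Finset.card_pos.mpr ⟨_, haN⟩
  calc deltaN n (insert (i₁ - 1, j₁ + 1) (Q.erase (i₂, j₂)))
      ≤ (insert (i₁ - 1, j₁ + 2) ((gridNbr n Q).erase (i₂, j₂ + 1))).card :=
        Finset.card_le_card hsub
    _ ≤ ((gridNbr n Q).erase (i₂, j₂ + 1)).card + 1 := Finset.card_insert_le _ _
    _ ≤ deltaN n Q := by
        rw [Finset.card_erase_of_mem haN]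
        unfold deltaN
        omega
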